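/- arXiv:2406.08269 — 5 statements merged into one kernel-verified Lean document; each statement's English description precedes it below -/
import Mathlib

section
/- Let L : Σ* → Δ(Σ_$) be a language model. For all u, v ∈ Σ*, u ≡ v if and only if the following two conditions hold: (i) P(u) > 0 if and only if P(v) > 0, and (ii) for all w ∈ Σ*, if P(uw) > 0 and P(vw) > 0 then L(uw) = L(vw). -/
/-! Writing `r_u(w) = P(uw)/P(u)`, the chain rule gives `r_u(wσ) = r_u(w) · L(uw)(σ)`.
So if `r_u = r_v`, dividing at any `w` with `P(uw) > 0` shows that `L(uw)` and `L(vw)` agree on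
`Σ`, hence also on `$` since both sum to one. Conversely, agreement of `L(uw)` and `L(vw)`
wherever both prefixes have positive probability propagates `r_u(w) = r_v(w)` by induction on
`w`: once the common ratio vanishes it stays zero. -/

section PrefixProbability

variable {α : Type*} {L : List α → Option α → ℝ} {P : List α → ℝ}

theorem prefixProb_nonneg (hL : ∀ u σ, 0 ≤ L u σ) (hP0 : P [] = 1)
    (hPs : ∀ u σ, P (u ++ [σ]) = P u * L u (some σ)) (w : List α) : 0 ≤ P w := by
  induction w using List.reverseRecOn with
  | nil => exact hP0 ▸ zero_le_one
  | append_singleton w σ ih => rw [hPs]; exact mul_nonneg ih (hL w _)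

theorem prefixProb_append_eq_zero (hPs : ∀ u σ, P (u ++ [σ]) = P u * L u (some σ))
    {u : List α} (hu : P u = 0) (w : List α) : P (u ++ w) = 0 := by
  induction w using List.reverseRecOn with
  | nil => simpa using hu
  | append_singleton w σ ih => rw [← List.append_assoc, hPs, ih, zero_mul]

theorem prefixProb_ratio_append_singleton (hPs : ∀ u σ, P (u ++ [σ]) = P u * L u (some σ))
    (u w : List α) (σ : α) :
    P (u ++ (w ++ [σ])) / P u = P (u ++ w) / P u * L (u ++ w) (some σ) := by
  rw [← List.append_assoc, hPs, mul_div_right_comm]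

theorem nextSymbolProb_eq_of_ratio_eq (hPs : ∀ u σ, P (u ++ [σ]) = P u * L u (some σ))
    {u v : List α} (hu : 0 < P u)
    (hratio : ∀ w, P (u ++ w) / P u = P (v ++ w) / P v)
    {w : List α} (huw : 0 < P (u ++ w)) (σ : α) :
    L (u ++ w) (some σ) = L (v ++ w) (some σ) := by
  have hstep := hratio (w ++ [σ])
  rw [prefixProb_ratio_append_singleton hPs, prefixProb_ratio_append_singleton hPs,
    ← hratio w] at hstep
  exact mul_left_cancel₀ (div_pos huw hu).ne' hstep

theorem ratio_eq_of_nextSymbolProb_eq (hL : ∀ u σ, 0 ≤ L u σ) (hP0 : P [] = 1)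
    (hPs : ∀ u σ, P (u ++ [σ]) = P u * L u (some σ))
    {u v : List α} (hu : 0 < P u) (hv : 0 < P v)
    (hnext : ∀ w, 0 < P (u ++ w) → 0 < P (v ++ w) → L (u ++ w) = L (v ++ w)) (w : List α) :
    P (u ++ w) / P u = P (v ++ w) / P v := by
  induction w using List.reverseRecOn with
  | nil => simp [hu.ne', hv.ne']
  | append_singleton w σ ih =>
    rw [prefixProb_ratio_append_singleton hPs, prefixProb_ratio_append_singleton hPs, ih]
    rcases (prefixProb_nonneg hL hP0 hPs (u ++ w)).eq_or_lt with huw | huw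
    · have hvw : P (v ++ w) = 0 := by
        simpa [← huw, hv.ne'] using ih.symm
      simp [hvw]
    · have hvw : 0 < P (v ++ w) := by
        have := div_pos huw hu
        rw [ih] at this
        exact (div_pos_iff_of_pos_right hv).mp this
      rw [hnext w huw hvw]

end PrefixProbability

theorem Option.eq_of_sum_eq_one_of_forall_some {α : Type*} [Fintype α] {p q : Option α → ℝ}
    (hp : ∑ σ, p σ = 1) (hq : ∑ σ, q σ = 1) (h : ∀ a, p (some a) = q (some a)) : p = q := by
  rw [Fintype.sum_option] at hp hq
  have hsome : ∑ a, p (some a) = ∑ a, q (some a) := Finset.sum_congr rfl fun a _ => h a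
  funext σ
  cases σ with
  | none => linarith
  | some a => exact h a

theorem stmt_0_general (α : Type) [Fintype α]
    (L : List α → Option α → ℝ)
    (hL : ∀ u, (∀ σ, 0 ≤ L u σ) ∧ (∑ σ : Option α, L u σ) = 1)
    (P : List α → ℝ)
    (hP0 : P [] = 1)
    (hPs : ∀ u σ, P (u ++ [σ]) = P u * L u (some σ))
    (u v : List α) :
    ((P u = 0 ∧ P v = 0) ∨
      (0 < P u ∧ 0 < P v ∧ ∀ w : List α, P (u ++ w) / P u = P (v ++ w) / P v)) ↔
    ((0 < P u ↔ 0 < P v) ∧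
      ∀ w : List α, 0 < P (u ++ w) → 0 < P (v ++ w) → L (u ++ w) = L (v ++ w)) := by
  have hnonneg : ∀ u σ, 0 ≤ L u σ := fun u => (hL u).1
  constructor
  · rintro (⟨hu, hv⟩ | ⟨hu, hv, hratio⟩)
    · refine ⟨by simp [hu, hv], fun w huw _ => ?_⟩
      exact absurd (prefixProb_append_eq_zero hPs hu w) huw.ne'
    · refine ⟨iff_of_true hu hv, fun w huw _ => ?_⟩
      exact Option.eq_of_sum_eq_one_of_forall_some (hL _).2 (hL _).2
        (nextSymbolProb_eq_of_ratio_eq hPs hu hratio huw)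
  · rintro ⟨hpos, hnext⟩
    by_cases hu : 0 < P u
    · exact Or.inr ⟨hu, hpos.mp hu, ratio_eq_of_nextSymbolProb_eq hnonneg hP0 hPs hu
        (hpos.mp hu) hnext⟩
    · have hv : ¬ 0 < P v := mt hpos.mpr hu
      have hnn := prefixProb_nonneg hnonneg hP0 hPs
      exact Or.inl ⟨((hnn u).eq_of_not_lt hu).symm, ((hnn v).eq_of_not_lt hv).symm⟩

/-- Let `L : Σ* → Δ(Σ_$)` be a language model. For all `u v ∈ Σ*`,
`u ≡ v` iff (i) `P(u) > 0 ↔ P(v) > 0` and (ii) for all `w`, if `P(uw) > 0` and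
`P(vw) > 0` then `L(uw) = L(vw)`.
Here `Σ_$` is modeled as `Option α` with `none` the termination symbol `$`, and
`P` is the prefix probability determined by `P(λ) = 1`, `P(uσ) = P(u)·L(u)(σ)`. -/
theorem stmt_0 (α : Type) [Fintype α] [Nonempty α]
    (L : List α → Option α → ℝ)
    (hL : ∀ u, (∀ σ, 0 ≤ L u σ) ∧ (∑ σ : Option α, L u σ) = 1)
    (P : List α → ℝ)
    (hP0 : P [] = 1)
    (hPs : ∀ u σ, P (u ++ [σ]) = P u * L u (some σ))
    (u v : List α) :
    ((P u = 0 ∧ P v = 0) ∨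
      (0 < P u ∧ 0 < P v ∧ ∀ w : List α, P (u ++ w) / P u = P (v ++ w) / P v)) ↔
    ((0 < P u ↔ 0 < P v) ∧
      ∀ w : List α, 0 < P (u ++ w) → 0 < P (v ++ w) → L (u ++ w) = L (v ++ w)) :=
  stmt_0_general α L hL P hP0 hPs u v
end

section
/- Let L : Σ* → Δ(Σ_$) be a language model and E an equivalence relation on Δ(Σ_$) such that supp(ρ) = supp(ρ') whenever ρ =_E ρ'. Suppose u, v ∈ Σ* satisfy P(u) > 0, P(v) > 0, and for all w ∈ Σ*, if P(uw) > 0 and P(vw) > 0 then L(uw) =_E L(vw). Then for every w ∈ Σ*, P(uw) > 0 if and only if P(vw) > 0. -/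
/-!
By induction on `w` from the right. Since next-symbol probabilities are nonnegative,
`P(uwσ) = P(uw) · L(uw)(σ)` is positive exactly when both `P(uw)` and `L(uw)(σ)` are. If
`P(uw)` and `P(vw)` are both positive, then `L(uw) =_E L(vw)`, so the two distributions have
the same support and `L(uw)(σ) > 0 ↔ L(vw)(σ) > 0`.
-/

section PrefixProbability

variable {α : Type} {L : List α → Option α → ℝ} {P : List α → ℝ}

theorem prefixProb_append_singleton_pos_iff (hL : ∀ u σ, 0 ≤ L u σ)
    (hPs : ∀ u σ, P (u ++ [σ]) = P u * L u (some σ)) (u : List α) (σ : α) :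
    0 < P (u ++ [σ]) ↔ 0 < P u ∧ 0 < L u (some σ) := by
  rw [hPs]
  refine ⟨fun h => ?_, fun h => mul_pos h.1 h.2⟩
  have hPu : 0 < P u := pos_of_mul_pos_left h (hL u (some σ))
  exact ⟨hPu, pos_of_mul_pos_right h hPu.le⟩

theorem prefixProb_append_pos_iff_of_nextSymbol_pos_iff (hL : ∀ u σ, 0 ≤ L u σ)
    (hPs : ∀ u σ, P (u ++ [σ]) = P u * L u (some σ)) {u v : List α}
    (hu : 0 < P u) (hv : 0 < P v)
    (hL_pos : ∀ w, 0 < P (u ++ w) → 0 < P (v ++ w) →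
      ∀ σ, 0 < L (u ++ w) σ ↔ 0 < L (v ++ w) σ) (w : List α) :
    0 < P (u ++ w) ↔ 0 < P (v ++ w) := by
  induction w using List.reverseRecOn with
  | nil => simp only [List.append_nil, hu, hv]
  | append_singleton w σ ih =>
    simp only [← List.append_assoc, prefixProb_append_singleton_pos_iff hL hPs]
    constructor
    · rintro ⟨hPuw, hLuw⟩
      have hPvw := ih.mp hPuw
      exact ⟨hPvw, (hL_pos w hPuw hPvw (some σ)).mp hLuw⟩
    · rintro ⟨hPvw, hLvw⟩
      have hPuw := ih.mpr hPvw
      exact ⟨hPuw, (hL_pos w hPuw hPvw (some σ)).mpr hLvw⟩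

end PrefixProbability

theorem stmt_3_general (α : Type) [Fintype α]
    (L : List α → Option α → ℝ)
    (hL : ∀ u, (∀ σ, 0 ≤ L u σ) ∧ (∑ σ : Option α, L u σ) = 1)
    (P : List α → ℝ)
    (hPs : ∀ u σ, P (u ++ [σ]) = P u * L u (some σ))
    (E : (Option α → ℝ) → (Option α → ℝ) → Prop)
    (hsupp : ∀ ρ ρ', E ρ ρ' → {σ : Option α | 0 < ρ σ} = {σ : Option α | 0 < ρ' σ})
    (u v : List α)
    (hu : 0 < P u) (hv : 0 < P v)
    (h : ∀ w : List α, 0 < P (u ++ w) → 0 < P (v ++ w) → E (L (u ++ w)) (L (v ++ w))) :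
    ∀ w : List α, 0 < P (u ++ w) ↔ 0 < P (v ++ w) :=
  prefixProb_append_pos_iff_of_nextSymbol_pos_iff (fun u => (hL u).1) hPs hu hv
    fun w hPuw hPvw => Set.ext_iff.mp (hsupp _ _ (h w hPuw hPvw))

/-- Let `L` be a language model and `E` an equivalence relation on
`Δ(Σ_$)` preserving supports. If `P(u) > 0`, `P(v) > 0` and for all `w`,
`P(uw) > 0 → P(vw) > 0 → L(uw) =_E L(vw)`, then for every `w`,
`P(uw) > 0 ↔ P(vw) > 0`. (`Σ_$ = Option α`, `none` = `$`.) -/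
theorem stmt_3 (α : Type) [Fintype α] [Nonempty α]
    (L : List α → Option α → ℝ)
    (hL : ∀ u, (∀ σ, 0 ≤ L u σ) ∧ (∑ σ : Option α, L u σ) = 1)
    (P : List α → ℝ)
    (hP0 : P [] = 1)
    (hPs : ∀ u σ, P (u ++ [σ]) = P u * L u (some σ))
    (E : (Option α → ℝ) → (Option α → ℝ) → Prop)
    (hE : Equivalence E)
    (hsupp : ∀ ρ ρ', E ρ ρ' → {σ : Option α | 0 < ρ σ} = {σ : Option α | 0 < ρ' σ})
    (u v : List α)
    (hu : 0 < P u) (hv : 0 < P v)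
    (h : ∀ w : List α, 0 < P (u ++ w) → 0 < P (v ++ w) → E (L (u ++ w)) (L (v ++ w))) :
    ∀ w : List α, 0 < P (u ++ w) ↔ 0 < P (v ++ w) :=
  stmt_3_general α L hL P hPs E hsupp u v hu hv h
end

section
/- Let L : Σ* → Δ(Σ_$) be a language model and E an equivalence relation on Δ(Σ_$) such that supp(ρ) = supp(ρ') whenever ρ =_E ρ'. Let 0 denote the ≡_E-equivalence class {u ∈ Σ* : P(u) = 0}. Then there exists an injective map φ from the set of ≡_E-equivalence classes of Σ* other than 0 into the set of ≡•_E-equivalence classes of Σ*. -/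
/- Positivity of `P` propagates along `≡_E`: a one-letter extension `uσ` has positive probability
iff `P u > 0` and `σ ∈ supp (L u)`, and `=_E` preserves supports. Hence `≡_E` is a right congruence,
and in particular transitive. On strings of positive probability `≡•_E` refines `≡_E`, so sending
the `≡_E`-class of a representative `u` to its `≡•_E`-class is injective. -/

/-- `u ≡_E v`: the congruence of the paper coping with null probabilities. -/
def EqvE {α : Type} (L : List α → Option α → ℝ) (P : List α → ℝ)
    (E : (Option α → ℝ) → (Option α → ℝ) → Prop) (u v : List α) : Prop :=
  (0 < P u ↔ 0 < P v) ∧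
    ∀ w : List α, 0 < P (u ++ w) → 0 < P (v ++ w) → E (L (u ++ w)) (L (v ++ w))

/-- `u ≡•_E v`: the congruence of Mayr et al. -/
def EqvB {α : Type} (L : List α → Option α → ℝ)
    (E : (Option α → ℝ) → (Option α → ℝ) → Prop) (u v : List α) : Prop :=
  ∀ w : List α, E (L (u ++ w)) (L (v ++ w))

structure IsPrefixProbability {α : Type} (L : List α → Option α → ℝ) (P : List α → ℝ) :
    Prop where
  prob_nonneg : ∀ u σ, 0 ≤ L u σ
  nil : P [] = 1
  append_singleton : ∀ u σ, P (u ++ [σ]) = P u * L u (some σ)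

variable {α : Type} {L : List α → Option α → ℝ} {P : List α → ℝ}
  {E : (Option α → ℝ) → (Option α → ℝ) → Prop}

namespace IsPrefixProbability

theorem nonneg (hLP : IsPrefixProbability L P) (u : List α) : 0 ≤ P u := by
  induction u using List.reverseRecOn with
  | nil => rw [hLP.nil]; exact zero_le_one
  | append_singleton u σ ih => rw [hLP.append_singleton]; exact mul_nonneg ih (hLP.prob_nonneg _ _)

theorem append_eq_zero (hLP : IsPrefixProbability L P) {u : List α} (hu : P u = 0)
    (w : List α) : P (u ++ w) = 0 := by
  induction w using List.reverseRecOn with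
  | nil => simpa using hu
  | append_singleton w σ ih => rw [← List.append_assoc, hLP.append_singleton, ih, zero_mul]

theorem pos_of_pos_append (hLP : IsPrefixProbability L P) {u w : List α}
    (h : 0 < P (u ++ w)) : 0 < P u :=
  (hLP.nonneg u).lt_of_ne fun hu => h.ne' (hLP.append_eq_zero hu.symm w)

theorem pos_append_singleton_iff (hLP : IsPrefixProbability L P) (u : List α) (σ : α) :
    0 < P (u ++ [σ]) ↔ 0 < P u ∧ 0 < L u (some σ) := by
  rw [hLP.append_singleton]
  exact ⟨fun h => ⟨pos_of_mul_pos_left h (hLP.prob_nonneg _ _),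
    pos_of_mul_pos_right h (hLP.nonneg u)⟩, fun h => mul_pos h.1 h.2⟩

theorem setOf_eqvE_eq_of_eq_zero (hLP : IsPrefixProbability L P) {u : List α} (hu : P u = 0) :
    {v | EqvE L P E u v} = {v | P v = 0} := by
  ext v
  refine ⟨fun h => le_antisymm (not_lt.mp fun hv => (h.1.mpr hv).ne' hu) (hLP.nonneg v),
    fun hv => ⟨by rw [hu, hv], fun w hw _ => absurd (hLP.append_eq_zero hu w) hw.ne'⟩⟩

theorem pos_of_setOf_eqvE_ne (hLP : IsPrefixProbability L P) {u : List α}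
    (hne : {v | EqvE L P E u v} ≠ {v | P v = 0}) : 0 < P u :=
  (hLP.nonneg u).lt_of_ne fun hu => hne (hLP.setOf_eqvE_eq_of_eq_zero hu.symm)

end IsPrefixProbability

namespace EqvE

theorem symm (hE : Equivalence E) {u v : List α} (h : EqvE L P E u v) : EqvE L P E v u :=
  ⟨h.1.symm, fun w hv hu => hE.symm (h.2 w hu hv)⟩

theorem pos_append_singleton (hLP : IsPrefixProbability L P)
    (hsupp : ∀ ρ ρ', E ρ ρ' → {σ : Option α | 0 < ρ σ} = {σ : Option α | 0 < ρ' σ})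
    {u v : List α} (h : EqvE L P E u v) {σ : α} (hu : 0 < P (u ++ [σ])) :
    0 < P (v ++ [σ]) := by
  obtain ⟨hPu, hLu⟩ := (hLP.pos_append_singleton_iff u σ).mp hu
  have hPv : 0 < P v := h.1.mp hPu
  have hEuv : E (L u) (L v) := by simpa using h.2 [] (by simpa using hPu) (by simpa using hPv)
  have hLv : 0 < L v (some σ) := (Set.ext_iff.mp (hsupp _ _ hEuv) (some σ)).mp hLu
  exact (hLP.pos_append_singleton_iff v σ).mpr ⟨hPv, hLv⟩

theorem append_singleton (hLP : IsPrefixProbability L P) (hE : Equivalence E)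
    (hsupp : ∀ ρ ρ', E ρ ρ' → {σ : Option α | 0 < ρ σ} = {σ : Option α | 0 < ρ' σ})
    {u v : List α} (h : EqvE L P E u v) (σ : α) : EqvE L P E (u ++ [σ]) (v ++ [σ]) :=
  ⟨⟨h.pos_append_singleton hLP hsupp, (h.symm hE).pos_append_singleton hLP hsupp⟩,
    fun w hu hv => by simpa using h.2 ([σ] ++ w) (by simpa using hu) (by simpa using hv)⟩

theorem append (hLP : IsPrefixProbability L P) (hE : Equivalence E)
    (hsupp : ∀ ρ ρ', E ρ ρ' → {σ : Option α | 0 < ρ σ} = {σ : Option α | 0 < ρ' σ})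
    {u v : List α} (h : EqvE L P E u v) (w : List α) : EqvE L P E (u ++ w) (v ++ w) := by
  induction w using List.reverseRecOn with
  | nil => simpa using h
  | append_singleton w σ ih => simpa using ih.append_singleton hLP hE hsupp σ

theorem trans (hLP : IsPrefixProbability L P) (hE : Equivalence E)
    (hsupp : ∀ ρ ρ', E ρ ρ' → {σ : Option α | 0 < ρ σ} = {σ : Option α | 0 < ρ' σ})
    {u v x : List α} (h₁ : EqvE L P E u v) (h₂ : EqvE L P E v x) : EqvE L P E u x :=
  ⟨h₁.1.trans h₂.1, fun w hu hx =>
    have hv : 0 < P (v ++ w) := ((h₁.append hLP hE hsupp w).1).mp hu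
    hE.trans (h₁.2 w hu hv) (h₂.2 w hv hx)⟩

theorem setOf_eq (hLP : IsPrefixProbability L P) (hE : Equivalence E)
    (hsupp : ∀ ρ ρ', E ρ ρ' → {σ : Option α | 0 < ρ σ} = {σ : Option α | 0 < ρ' σ})
    {u v : List α} (h : EqvE L P E u v) : {x | EqvE L P E u x} = {x | EqvE L P E v x} :=
  Set.ext fun _ => ⟨(h.symm hE).trans hLP hE hsupp, h.trans hLP hE hsupp⟩

theorem of_eqvB {u v : List α} (hu : 0 < P u) (hv : 0 < P v) (h : EqvB L E u v) :
    EqvE L P E u v :=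
  ⟨iff_of_true hu hv, fun w _ _ => h w⟩

end EqvE

theorem EqvB.of_setOf_eq (hE : Equivalence E) {u v : List α}
    (h : {x | EqvB L E u x} = {x | EqvB L E v x}) : EqvB L E u v := by
  have hv : v ∈ {x | EqvB L E v x} := fun _ => hE.refl _
  rw [← h] at hv
  exact hv

/-- `Σ_$` is `Option α` with `none` as `$`; classes are represented as subsets of `Σ*`. -/
theorem stmt_7_general (α : Type) [Fintype α]
    (L : List α → Option α → ℝ)
    (hL : ∀ u, (∀ σ, 0 ≤ L u σ) ∧ (∑ σ : Option α, L u σ) = 1)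
    (P : List α → ℝ)
    (hP0 : P [] = 1)
    (hPs : ∀ u σ, P (u ++ [σ]) = P u * L u (some σ))
    (E : (Option α → ℝ) → (Option α → ℝ) → Prop)
    (hE : Equivalence E)
    (hsupp : ∀ ρ ρ', E ρ ρ' → {σ : Option α | 0 < ρ σ} = {σ : Option α | 0 < ρ' σ}) :
    ∃ φ : Set (List α) → Set (List α),
      (∀ C ∈ {C : Set (List α) |
          (∃ u, C = {v | EqvE L P E u v}) ∧ C ≠ {u | P u = 0}},
        φ C ∈ {C : Set (List α) | ∃ u, C = {v | EqvB L E u v}}) ∧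
      Set.InjOn φ {C : Set (List α) |
        (∃ u, C = {v | EqvE L P E u v}) ∧ C ≠ {u | P u = 0}} := by
  have hLP : IsPrefixProbability L P := ⟨fun u => (hL u).1, hP0, hPs⟩
  let rep : Set (List α) → List α := fun C => Classical.epsilon fun u => C = {v | EqvE L P E u v}
  refine ⟨fun C => {v | EqvB L E (rep C) v}, fun C _ => ⟨rep C, rfl⟩, ?_⟩
  rintro C ⟨hC, hC0⟩ C' ⟨hC', hC'0⟩ hφ
  have hCrep : C = {v | EqvE L P E (rep C) v} := Classical.epsilon_spec hC
  have hC'rep : C' = {v | EqvE L P E (rep C') v} := Classical.epsilon_spec hC'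
  have hpos : 0 < P (rep C) := hLP.pos_of_setOf_eqvE_ne (hCrep ▸ hC0)
  have hpos' : 0 < P (rep C') := hLP.pos_of_setOf_eqvE_ne (hC'rep ▸ hC'0)
  have hB : EqvB L E (rep C) (rep C') := EqvB.of_setOf_eq hE hφ
  rw [hCrep, hC'rep]
  exact (EqvE.of_eqvB hpos hpos' hB).setOf_eq hLP hE hsupp

/-- There exists an injective map `φ` from the set of
`≡_E`-equivalence classes of `Σ*` other than the class `0 = {u | P u = 0}`
into the set of `≡•_E`-equivalence classes of `Σ*`.
(`Σ_$ = Option α`, `none` = `$`; classes are represented as subsets of `Σ*`.) -/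
theorem stmt_7 (α : Type) [Fintype α] [Nonempty α]
    (L : List α → Option α → ℝ)
    (hL : ∀ u, (∀ σ, 0 ≤ L u σ) ∧ (∑ σ : Option α, L u σ) = 1)
    (P : List α → ℝ)
    (hP0 : P [] = 1)
    (hPs : ∀ u σ, P (u ++ [σ]) = P u * L u (some σ))
    (E : (Option α → ℝ) → (Option α → ℝ) → Prop)
    (hE : Equivalence E)
    (hsupp : ∀ ρ ρ', E ρ ρ' → {σ : Option α | 0 < ρ σ} = {σ : Option α | 0 < ρ' σ}) :
    ∃ φ : Set (List α) → Set (List α),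
      (∀ C ∈ {C : Set (List α) |
          (∃ u, C = {v | EqvE L P E u v}) ∧ C ≠ {u | P u = 0}},
        φ C ∈ {C : Set (List α) | ∃ u, C = {v | EqvB L E u v}}) ∧
      Set.InjOn φ {C : Set (List α) |
        (∃ u, C = {v | EqvE L P E u v}) ∧ C ≠ {u | P u = 0}} :=
  stmt_7_general α L hL P hP0 hPs E hE hsupp
end

section
/- Let A = (Q, q_in, π, τ) be a PDFA over Σ, let L be the language model it defines, and let E be an equivalence relation on Δ(Σ_$) such that supp(ρ) = supp(ρ') whenever ρ =_E ρ'. Then the relation ≡_E on Σ* has at most |Q| + 1 equivalence classes. -/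
theorem Set.finite_range_and_ncard_range_le_of_factorsThrough {β γ ι : Type*} [Finite ι]
    (f : β → ι) (g : β → γ) (h : ∀ a b, f a = f b → g a = g b) :
    (Set.range g).Finite ∧ (Set.range g).ncard ≤ Nat.card ι := by
  let g' : Set.range f → γ := fun i => g i.2.choose
  have hrange : Set.range g = Set.range g' := by
    refine le_antisymm ?_ (Set.range_subset_iff.2 fun i => ⟨_, rfl⟩)
    rintro _ ⟨b, rfl⟩
    exact ⟨⟨f b, b, rfl⟩, h _ _ (Exists.choose_spec (⟨b, rfl⟩ : ∃ a, f a = f b))⟩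
  rw [hrange]
  refine ⟨Set.finite_range g', ?_⟩
  rw [← Nat.card_coe_set_eq]
  exact (Finite.card_range_le g').trans (Set.ncard_le_card _)

section EqvE

variable {α : Type} {L : List α → Option α → ℝ} {P : List α → ℝ}
  {E : (Option α → ℝ) → (Option α → ℝ) → Prop}

theorem eqvE_iff_of_forall_not_pos {u : List α} (hu : ∀ w, ¬ 0 < P (u ++ w)) (v : List α) :
    EqvE L P E u v ↔ ¬ 0 < P v := by
  have hu₀ : ¬ 0 < P u := by simpa using hu []
  exact ⟨fun h hv => hu₀ (h.1.2 hv),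
    fun hv => ⟨iff_of_false hu₀ hv, fun w hw => absurd hw (hu w)⟩⟩

theorem eqvE_congr_left {u v : List α} (hP : ∀ w, 0 < P (u ++ w) ↔ 0 < P (v ++ w))
    (hL : ∀ w, L (u ++ w) = L (v ++ w)) (x : List α) :
    EqvE L P E u x ↔ EqvE L P E v x := by
  have hP₀ : 0 < P u ↔ 0 < P v := by simpa using hP []
  unfold EqvE
  rw [hP₀]
  refine and_congr_right fun _ => forall_congr' fun w => ?_
  rw [hP w, hL w]

end EqvE

section PDFA

variable {α Q : Type} (pi : Q → Option α → ℝ) (τ : Q → α → Q)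

def pathWeight (q : Q) : List α → ℝ
  | [] => 1
  | σ :: w => pi q (some σ) * pathWeight (τ q σ) w

variable {pi τ}

theorem pathWeight_nonneg (hpi : ∀ q σ, 0 ≤ pi q σ) (q : Q) (w : List α) :
    0 ≤ pathWeight pi τ q w := by
  induction w generalizing q with
  | nil => exact zero_le_one
  | cons σ w ih => exact mul_nonneg (hpi q _) (ih _)

variable {qin : Q} {L : List α → Option α → ℝ} {P : List α → ℝ}

theorem prefixProb_append (hLdef : ∀ u : List α, L u = pi (u.foldl τ qin))
    (hPs : ∀ u σ, P (u ++ [σ]) = P u * L u (some σ)) (u w : List α) :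
    P (u ++ w) = P u * pathWeight pi τ (u.foldl τ qin) w := by
  induction w generalizing u with
  | nil => simp [pathWeight]
  | cons σ w ih =>
    rw [← List.singleton_append, ← List.append_assoc, ih, hPs, hLdef]
    simp only [List.singleton_append, pathWeight, List.foldl_append, List.foldl_cons,
      List.foldl_nil]
    ring

end PDFA

/-- `Σ_$` is encoded as `Option α`, with `none` for `$`, and `τ*(q_in, u)` as `u.foldl τ qin`. -/
theorem stmt_11_general (α : Type) (Q : Type) [Fintype α] [Fintype Q]
    (qin : Q)
    (pi : Q → Option α → ℝ)
    (hpi : ∀ q, (∀ σ, 0 ≤ pi q σ) ∧ (∑ σ : Option α, pi q σ) = 1)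
    (τ : Q → α → Q)
    (L : List α → Option α → ℝ)
    (hLdef : ∀ u : List α, L u = pi (u.foldl τ qin))
    (P : List α → ℝ)
    (hPs : ∀ u σ, P (u ++ [σ]) = P u * L u (some σ))
    (E : (Option α → ℝ) → (Option α → ℝ) → Prop) :
    {C : Set (List α) | ∃ u, C = {v | EqvE L P E u v}}.Finite ∧
    {C : Set (List α) | ∃ u, C = {v | EqvE L P E u v}}.ncard ≤ Fintype.card Q + 1 := by
  classical
  have hP := prefixProb_append hLdef hPs
  have hL (u w : List α) : L (u ++ w) = pi (w.foldl τ (u.foldl τ qin)) := by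
    rw [hLdef, List.foldl_append]
  have hdead {u : List α} (hu : ¬ 0 < P u) (w : List α) : ¬ 0 < P (u ++ w) := by
    rw [hP]
    exact (mul_nonpos_of_nonpos_of_nonneg (not_lt.1 hu)
      (pathWeight_nonneg (fun q => (hpi q).1) _ _)).not_gt
  let state (u : List α) : Option Q := if 0 < P u then some (u.foldl τ qin) else none
  have hclass (u v : List α) (h : state u = state v) :
      {x | EqvE L P E u x} = {x | EqvE L P E v x} := by
    ext x
    by_cases hu : 0 < P u <;> by_cases hv : 0 < P v <;> simp [state, hu, hv] at h
    · refine eqvE_congr_left (fun w => ?_) (fun w => by rw [hL, hL, h]) x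
      rw [hP, hP, h, mul_pos_iff_of_pos_left hu, mul_pos_iff_of_pos_left hv]
    · simp only [Set.mem_ofPred_eq, eqvE_iff_of_forall_not_pos (hdead hu),
        eqvE_iff_of_forall_not_pos (hdead hv)]
  have hrange : {C : Set (List α) | ∃ u, C = {v | EqvE L P E u v}} =
      Set.range fun u => {v | EqvE L P E u v} := by
    simp only [Set.range, eq_comm]
  rw [hrange, ← Fintype.card_option, ← Nat.card_eq_fintype_card]
  exact Set.finite_range_and_ncard_range_le_of_factorsThrough state _ hclass

/-- Let `A = (Q, q_in, π, τ)` be a PDFA over `Σ`, `L` the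
language model it defines (`L(u) = π(τ*(q_in, u))`, `τ*(q, w) = w.foldl τ q`),
and `E` a support-preserving equivalence relation on `Δ(Σ_$)`. Then `≡_E` has at
most `|Q| + 1` equivalence classes. (`Σ_$ = Option α`, `none` = `$`; `P` is the
prefix probability of `L`.) -/
theorem stmt_11 (α : Type) (Q : Type) [Fintype α] [Nonempty α] [Fintype Q]
    (qin : Q)
    (pi : Q → Option α → ℝ)
    (hpi : ∀ q, (∀ σ, 0 ≤ pi q σ) ∧ (∑ σ : Option α, pi q σ) = 1)
    (τ : Q → α → Q)
    (L : List α → Option α → ℝ)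
    (hLdef : ∀ u : List α, L u = pi (u.foldl τ qin))
    (P : List α → ℝ)
    (hP0 : P [] = 1)
    (hPs : ∀ u σ, P (u ++ [σ]) = P u * L u (some σ))
    (E : (Option α → ℝ) → (Option α → ℝ) → Prop)
    (hE : Equivalence E)
    (hsupp : ∀ ρ ρ', E ρ ρ' → {σ : Option α | 0 < ρ σ} = {σ : Option α | 0 < ρ' σ}) :
    {C : Set (List α) | ∃ u, C = {v | EqvE L P E u v}}.Finite ∧
    {C : Set (List α) | ∃ u, C = {v | EqvE L P E u v}}.ncard ≤ Fintype.card Q + 1 :=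
  stmt_11_general α Q qin pi hpi τ L hLdef P hPs E
end

section
/- Let L : Σ* → Δ(Σ_$) be a language model and let μ be the unique probability measure on (Σ_$)^ℕ (product σ-algebra) satisfying μ{x : x_1 ⋯ x_k = w} = P_k(w) for every k ≥ 1 and w ∈ (Σ_$)^k. Then μ{x ∈ (Σ_$)^ℕ : there exists k ≥ 1 with x_k = $} = ∑_{w ∈ Σ*} P_$(w). Consequently, ∑_{w ∈ Σ*} P_$(w) = 1 if and only if μ{x : x_k ∈ Σ for all k ≥ 1} = 0, i.e. iff a string sampled from μ is finite with probability 1. -/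
/-!
The event that some `x k` is `$` is the disjoint union, over `w ∈ Σ*`, of the events
"`x` reads `w` and then `$`" (split according to the first occurrence of `$`). Each of
these is the cylinder of `w$`, whose probability `P_k(w$) = P(w) · L(w)($)` is `P_$(w)`;
countable additivity gives the identity, and the equivalence is its complement.
-/

open MeasureTheory

/-- `Σ_$ = Option α` (with `none` = `$`) carries the discrete σ-algebra. -/
instance optionDiscreteMeasurableSpace (α : Type) : MeasurableSpace (Option α) := ⊤

/-- `L_$`: the extension of the language model `L` to strings over `Σ_$`,
sending any string containing `$` to the point mass `δ_$` at `$`. -/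
noncomputable def Lext {α : Type} [Fintype α] [DecidableEq α]
    (L : List α → Option α → ℝ) (w : List (Option α)) : Option α → ℝ :=
  if none ∈ w then fun σ => if σ = none then 1 else 0
  else L w.reduceOption

/-- `P_k(w) = ∏_{i=1}^{k} L_$(w_{<i})(w_i)` for `w ∈ (Σ_$)^k`. -/
noncomputable def Pk {α : Type} [Fintype α] [DecidableEq α]
    (L : List α → Option α → ℝ) (w : List (Option α)) : ℝ :=
  ∏ i ∈ Finset.range w.length, Lext L (w.take i) (w.getD i none)

section

variable {α : Type}

lemma Lext_map_some [Fintype α] [DecidableEq α]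
    (L : List α → Option α → ℝ) (u : List α) :
    Lext L (u.map some) = L u := by
  simp [Lext, List.reduceOption]

lemma Pk_append_singleton [Fintype α] [DecidableEq α]
    (L : List α → Option α → ℝ) (v : List (Option α)) (σ : Option α) :
    Pk L (v ++ [σ]) = Pk L v * Lext L v σ := by
  unfold Pk
  rw [List.length_append, List.length_singleton, Finset.prod_range_succ]
  congr 1
  · refine Finset.prod_congr rfl fun i hi => ?_
    rw [Finset.mem_range] at hi
    rw [List.take_append_of_le_length hi.le, List.getD_append _ _ _ _ hi]
  · simp

lemma Pk_map_some [Fintype α] [DecidableEq α]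
    {L : List α → Option α → ℝ} {P : List α → ℝ}
    (hP0 : P [] = 1) (hPs : ∀ u σ, P (u ++ [σ]) = P u * L u (some σ)) (w : List α) :
    Pk L (w.map some) = P w := by
  induction w using List.reverseRecOn with
  | nil => simp [Pk, hP0]
  | append_singleton u σ ih =>
    rw [List.map_append, List.map_singleton, Pk_append_singleton, Lext_map_some, ih, hPs]

def terminatesWith (w : List α) : Set (ℕ → Option α) :=
  {x | (∀ i (h : i < w.length), x i = some w[i]) ∧ x w.length = none}

lemma terminatesWith_eq_cylinder (w : List α) :
    terminatesWith w = {x | ∀ i, i < (w.map some ++ [none]).length →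
      x i = (w.map some ++ [none]).getD i none} := by
  ext x
  simp only [terminatesWith, Set.mem_ofPred_eq, List.length_append, List.length_map,
    List.length_singleton, Nat.lt_succ_iff_lt_or_eq, or_imp, forall_and, forall_eq]
  refine and_congr (forall_congr' fun i => forall_congr' fun hi => ?_) (by simp)
  rw [List.getD_append _ _ _ _ (by simpa using hi)]
  simp [List.getElem?_eq_getElem hi]

lemma measurableSet_terminatesWith (w : List α) :
    MeasurableSet (terminatesWith w) := by
  unfold terminatesWith
  measurability

lemma pairwise_disjoint_terminatesWith :
    Pairwise (Function.onFun Disjoint (terminatesWith (α := α))) := by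
  intro w w' hne
  refine Set.disjoint_left.2 fun x ⟨hw, hw_end⟩ ⟨hw', hw'_end⟩ => hne ?_
  have hlen : w.length = w'.length := by
    by_contra hne_len
    rcases Nat.lt_or_gt_of_ne hne_len with h | h
    · simp [hw' _ h] at hw_end
    · simp [hw _ h] at hw'_end
  refine List.ext_getElem hlen fun i h h' => ?_
  simpa [hw i h] using hw' i h'

lemma iUnion_terminatesWith :
    ⋃ w : List α, terminatesWith w = {x | ∃ k, x k = none} := by
  classical
  ext x
  simp only [Set.mem_iUnion, Set.mem_ofPred_eq]
  constructor
  · rintro ⟨w, -, hw_end⟩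
    exact ⟨w.length, hw_end⟩
  · intro hex
    have hsome (i : ℕ) (hi : i < Nat.find hex) : (x i).isSome :=
      Option.isSome_iff_ne_none.2 (Nat.find_min hex hi)
    refine ⟨List.ofFn fun i : Fin (Nat.find hex) => (x i).get (hsome i i.2), ?_, ?_⟩
    · simp
    · simpa using Nat.find_spec hex

end

theorem stmt_15_general (α : Type) [Fintype α] [DecidableEq α]
    (L : List α → Option α → ℝ)
    (P : List α → ℝ)
    (hP0 : P [] = 1)
    (hPs : ∀ u σ, P (u ++ [σ]) = P u * L u (some σ))
    (μ : Measure (ℕ → Option α))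
    (hμ : IsProbabilityMeasure μ)
    (hcyl : ∀ w : List (Option α), 1 ≤ w.length →
      μ {x | ∀ i, i < w.length → x i = w.getD i none} = ENNReal.ofReal (Pk L w)) :
    (μ {x | ∃ k, x k = none} = ∑' w : List α, ENNReal.ofReal (P w * L w none)) ∧
    ((∑' w : List α, ENNReal.ofReal (P w * L w none)) = 1 ↔
      μ {x | ∀ k, x k ≠ none} = 0) := by
  have hterm (w : List α) : μ (terminatesWith w) = ENNReal.ofReal (P w * L w none) := by
    rw [terminatesWith_eq_cylinder, hcyl _ (by simp), Pk_append_singleton, Lext_map_some,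
      Pk_map_some hP0 hPs]
  have hstop : μ {x | ∃ k, x k = none} = ∑' w : List α, ENNReal.ofReal (P w * L w none) := by
    rw [← iUnion_terminatesWith, measure_iUnion pairwise_disjoint_terminatesWith
      measurableSet_terminatesWith]
    exact tsum_congr hterm
  have hnever : {x : ℕ → Option α | ∀ k, x k ≠ none} = {x | ∃ k, x k = none}ᶜ := by
    ext x
    simp
  have hmeas : MeasurableSet {x : ℕ → Option α | ∃ k, x k = none} :=
    iUnion_terminatesWith ▸ .iUnion measurableSet_terminatesWith
  refine ⟨hstop, ?_⟩
  rw [hnever, prob_compl_eq_zero_iff hmeas, hstop]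

/-- Let `μ` be the (unique) probability measure on `(Σ_$)^ℕ`
(product σ-algebra) whose cylinder probabilities are given by `P_k`. Then
`μ{x | ∃ k, x_k = $} = ∑_{w ∈ Σ*} P_$(w)` where `P_$(w) = P(w)·L(w)($)`.
Consequently, `∑_{w ∈ Σ*} P_$(w) = 1` iff `μ{x | ∀ k, x_k ∈ Σ} = 0`, i.e. iff a
string sampled from `μ` is finite with probability 1. (0-indexed sequences.) -/
theorem stmt_15 (α : Type) [Fintype α] [DecidableEq α] [Nonempty α]
    (L : List α → Option α → ℝ)
    (hL : ∀ u, (∀ σ, 0 ≤ L u σ) ∧ (∑ σ : Option α, L u σ) = 1)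
    (P : List α → ℝ)
    (hP0 : P [] = 1)
    (hPs : ∀ u σ, P (u ++ [σ]) = P u * L u (some σ))
    (μ : Measure (ℕ → Option α))
    (hμ : IsProbabilityMeasure μ)
    (hcyl : ∀ w : List (Option α), 1 ≤ w.length →
      μ {x | ∀ i, i < w.length → x i = w.getD i none} = ENNReal.ofReal (Pk L w)) :
    (μ {x | ∃ k, x k = none} = ∑' w : List α, ENNReal.ofReal (P w * L w none)) ∧
    ((∑' w : List α, ENNReal.ofReal (P w * L w none)) = 1 ↔
      μ {x | ∀ k, x k ≠ none} = 0) :=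
  stmt_15_general α L P hP0 hPs μ hμ hcyl
end
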